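/- arXiv:2109.02030 — 2 statements merged into one kernel-verified Lean document; each statement's English description precedes it below -/
import Mathlib

section
/- Let k > 1 and k* = k/(k−1). Let f be a continuous function on 𝒫_k that is L-differentiable at every μ ∈ 𝒫_k, such that for every μ the L-derivative D^L f(μ) has a continuous version satisfying |D^L f(μ)(x)| ≤ c(μ)(1+|x|^{k−1}) for some constant c(μ), and such that K₀ := sup_{μ ∈ 𝒫_k} ‖D^L f(μ)‖_{L^{k*}(μ)} < ∞. Then f is globally Lipschitz with respect to the L^k-Wasserstein distance: |f(μ₁) − f(μ₂)| ≤ K₀ · W_k(μ₁, μ₂) for all μ₁, μ₂ ∈ 𝒫_k. -/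
open MeasureTheory Filter
open scoped ENNReal Topology RealInnerProductSpace

noncomputable section

variable (d : ℕ)

abbrev Ed (d : ℕ) := EuclideanSpace ℝ (Fin d)

/-- The space `𝒫_k` of probability measures on `ℝ^d` with finite `k`-th moment. -/
def Pk (k : ℝ) (d : ℕ) : Set (Measure (Ed d)) :=
  {μ | IsProbabilityMeasure μ ∧ Integrable (fun x => ‖x‖ ^ k) μ}

/-- The `L^k`-Wasserstein distance on `ℝ^d`, defined as the infimum over couplings. -/
def Wass (k : ℝ) (d : ℕ) (μ ν : Measure (Ed d)) : ℝ :=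
  sInf {r : ℝ | ∃ π : Measure (Ed d × Ed d),
    π.map Prod.fst = μ ∧ π.map Prod.snd = ν ∧
    r = (∫ p, ‖p.1 - p.2‖ ^ k ∂π) ^ (1 / k)}

/-- `Df : ℝ^d → ℝ^d` is the `L`-derivative of `f` at `μ ∈ 𝒫_k`:
the first-order Taylor expansion of `f` along pushforwards `μ ∘ (id + φ)^{-1}` holds
with remainder `o(‖φ‖_{L^k(μ)})`. -/
def IsLDerivAt (k : ℝ) (d : ℕ) (f : Measure (Ed d) → ℝ) (μ : Measure (Ed d))
    (Df : Ed d → Ed d) : Prop :=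
  ∀ ε > (0:ℝ), ∃ δ > (0:ℝ), ∀ φ : Ed d → Ed d, Measurable φ →
    MemLp φ (ENNReal.ofReal k) μ →
    (∫ x, ‖φ x‖ ^ k ∂μ) ^ (1 / k) ≤ δ →
    |f (μ.map (fun x => x + φ x)) - f μ - ∫ x, ⟪Df x, φ x⟫ ∂μ|
      ≤ ε * (∫ x, ‖φ x‖ ^ k ∂μ) ^ (1 / k)


/-!
Along the displacement interpolation `t ↦ Law(X + t (Y - X))` of a coupling `(X, Y)`, the
measure at time `t + h` is the pushforward of the one at time `t` by `id + h φ` whenever the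
position at time `t` determines the velocity `φ`. The L-derivative and Hölder's inequality then
bound the right Dini derivative of `t ↦ f(μ_t)` by `K₀ ‖Y - X‖_{L^k}`. For finitely valued
couplings this works at all times except the finitely many at which two atoms with different
velocities collide, and off a finite set such a bound still gives the mean value inequality for
a continuous function. A general coupling is approximated in `L^k` by finitely valued ones, the
continuity of `f` absorbs the error, and the infimum over couplings gives `K₀ W_k`.
-/

open Set

section RightDini

variable {g : ℝ → ℝ} {L a b : ℝ}

theorem abs_sub_le_mul_of_eventually_Ico (hab : a ≤ b) (hg : ContinuousOn g (Icc a b))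
    (hloc : ∀ t ∈ Ico a b, ∀ r > L, ∀ᶠ z in 𝓝[>] t, |g z - g t| ≤ r * (z - t)) :
    |g b - g a| ≤ L * (b - a) := by
  refine image_le_of_liminf_slope_right_le_deriv_boundary (f := fun x => |g x - g a|)
    (B := fun x => L * (x - a)) (B' := fun _ => L) ((hg.sub continuousOn_const).abs)
    (by simp) (by fun_prop) (fun x _ => ?_) (fun t ht r hr => ?_) ⟨hab, le_rfl⟩
  · simpa using ((hasDerivWithinAt_id x (Ici x)).sub_const a).const_mul L
  · have hr' : L < (L + r) / 2 := by linarith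
    refine Filter.Eventually.frequently ?_
    filter_upwards [hloc t ht _ hr', self_mem_nhdsWithin] with z hz (hzt : t < z)
    rw [slope_def_field, div_lt_iff₀ (sub_pos.2 hzt)]
    calc |g z - g a| - |g t - g a| ≤ |g z - g t| := by
          simpa using abs_sub_abs_le_abs_sub (g z - g a) (g t - g a)
      _ ≤ (L + r) / 2 * (z - t) := hz
      _ < r * (z - t) := by nlinarith

theorem abs_sub_le_mul_of_eventually_Ioo (hab : a ≤ b) (hg : ContinuousOn g (Icc a b))
    (hloc : ∀ t ∈ Ioo a b, ∀ r > L, ∀ᶠ z in 𝓝[>] t, |g z - g t| ≤ r * (z - t)) :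
    |g b - g a| ≤ L * (b - a) := by
  rcases hab.eq_or_lt with rfl | hab
  · simp
  have hc : ∀ c ∈ Ioo a b, |g b - g c| ≤ L * (b - c) := fun c hc =>
    abs_sub_le_mul_of_eventually_Ico hc.2.le (hg.mono (Icc_subset_Icc_left hc.1.le))
      fun t ht => hloc t ⟨hc.1.trans_le ht.1, ht.2⟩
  have hcont : ContinuousWithinAt g (Ioo a b) a :=
    (hg a ⟨le_rfl, hab.le⟩).mono Ioo_subset_Icc_self
  refine ContinuousWithinAt.closure_le (by rw [closure_Ioo hab.ne]; exact ⟨le_rfl, hab.le⟩)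
    (continuousWithinAt_const.sub hcont).abs (by fun_prop) hc

theorem abs_sub_le_mul_of_eventually_off_finite {S : Set ℝ} (hS : S.Finite) (hab : a ≤ b)
    (hg : ContinuousOn g (Icc a b))
    (hloc : ∀ t ∈ Ioo a b \ S, ∀ r > L, ∀ᶠ z in 𝓝[>] t, |g z - g t| ≤ r * (z - t)) :
    |g b - g a| ≤ L * (b - a) := by
  induction S, hS using Set.Finite.induction_on generalizing a b with
  | empty => exact abs_sub_le_mul_of_eventually_Ioo hab hg fun t ht => hloc t ⟨ht, id⟩
  | @insert p S _ _ ih =>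
    by_cases hp : p ∈ Ioo a b
    · have h₁ := ih hp.1.le (hg.mono (Icc_subset_Icc_right hp.2.le)) fun t ht =>
        hloc t ⟨⟨ht.1.1, ht.1.2.trans hp.2⟩, by rintro (rfl | h); exacts [ht.1.2.false, ht.2 h]⟩
      have h₂ := ih hp.2.le (hg.mono (Icc_subset_Icc_left hp.1.le)) fun t ht =>
        hloc t ⟨⟨hp.1.trans ht.1.1, ht.1.2⟩, by rintro (rfl | h); exacts [ht.1.1.false, ht.2 h]⟩
      calc |g b - g a| ≤ |g b - g p| + |g p - g a| := abs_sub_le _ _ _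
        _ ≤ L * (b - a) := by linarith
    · exact ih hab hg fun t ht =>
        hloc t ⟨ht.1, by rintro (rfl | h); exacts [hp ht.1, ht.2 h]⟩

end RightDini

section Crossing

variable {E : Type*} [AddCommGroup E] [Module ℝ E]

theorem subsingleton_setOf_add_smul_eq {x x' v v' : E} (hv : v ≠ v') :
    {t : ℝ | x + t • v = x' + t • v'}.Subsingleton := by
  intro t (ht : x + t • v = x' + t • v') u (hu : x + u • v = x' + u • v')
  have : (t - u) • (v - v') = 0 := calc
    _ = (x + t • v - (x + u • v)) - (x' + t • v' - (x' + u • v')) := by module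
    _ = 0 := by rw [ht, hu, sub_self]
  simpa [sub_eq_zero, hv] using this

theorem finite_setOf_crossing (R : Finset (E × E)) :
    {t : ℝ | ∃ q ∈ R, ∃ q' ∈ R, q.1 + t • (q.2 - q.1) = q'.1 + t • (q'.2 - q'.1) ∧
      q.2 - q.1 ≠ q'.2 - q'.1}.Finite := by
  refine (R.finite_toSet.biUnion fun q _ => R.finite_toSet.biUnion fun q' _ =>
    Set.Subsingleton.finite (s := {t : ℝ | q.1 + t • (q.2 - q.1) = q'.1 + t • (q'.2 - q'.1) ∧
      q.2 - q.1 ≠ q'.2 - q'.1}) ?_).subset ?_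
  · exact fun t ht u hu => subsingleton_setOf_add_smul_eq ht.2 ht.1 hu.1
  · rintro t ⟨q, hq, q', hq', h⟩
    exact Set.mem_biUnion hq (Set.mem_biUnion hq' h)

end Crossing

theorem exists_measurable_bounded_eq_on_finset {α E ι : Type*} [MeasurableSpace α]
    [MeasurableSingletonClass α] [NormedAddCommGroup E] [MeasurableSpace E]
    (R : Finset ι) (p : ι → α) (w : ι → E) (hpw : ∀ i ∈ R, ∀ j ∈ R, p i = p j → w i = w j) :
    ∃ φ : α → E, Measurable φ ∧ (∃ C, ∀ x, ‖φ x‖ ≤ C) ∧ ∀ i ∈ R, φ (p i) = w i := by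
  classical
  induction R using Finset.induction_on with
  | empty => exact ⟨0, measurable_const, ⟨0, by simp⟩, by simp⟩
  | @insert a R _ ih =>
    obtain ⟨φ, hφm, ⟨C, hC⟩, hφ⟩ := ih fun i hi j hj =>
      hpw i (Finset.mem_insert_of_mem hi) j (Finset.mem_insert_of_mem hj)
    refine ⟨fun x => if x = p a then w a else φ x,
      Measurable.ite measurableSet_eq measurable_const hφm, ⟨max ‖w a‖ C, fun x => ?_⟩, ?_⟩
    · dsimp only
      split_ifs
      exacts [le_max_left _ _, (hC x).trans (le_max_right _ _)]
    · simp only [Finset.forall_mem_insert, if_true]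
      refine ⟨trivial, fun i hi => ?_⟩
      split_ifs with h
      exacts [hpw a (R.mem_insert_self a) i (Finset.mem_insert_of_mem hi) h.symm, hφ i hi]

theorem toReal_eLpNorm_ofReal {α E : Type*} [MeasurableSpace α] [NormedAddCommGroup E]
    {k : ℝ} (hk : 0 < k) {P : Measure α} {F : α → E} (hF : AEStronglyMeasurable F P) :
    (eLpNorm F (ENNReal.ofReal k) P).toReal = (∫ v, ‖F v‖ ^ k ∂P) ^ (1 / k) := by
  have hk₀ : ENNReal.ofReal k ≠ 0 := by simpa using hk
  by_cases hF' : MemLp F (ENNReal.ofReal k) P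
  · rw [hF'.eLpNorm_eq_integral_rpow_norm hk₀ ENNReal.ofReal_ne_top,
      ENNReal.toReal_ofReal (by positivity), ENNReal.toReal_ofReal hk.le, one_div]
  · have hint := mt (integrable_norm_rpow_iff hF hk₀ ENNReal.ofReal_ne_top).1 hF'
    have htop : eLpNorm F (ENNReal.ofReal k) P = ⊤ := by simpa [MemLp, hF] using hF'
    rw [ENNReal.toReal_ofReal hk.le] at hint
    rw [htop, integral_undef hint, Real.zero_rpow (by positivity), ENNReal.toReal_top]

section Wasserstein

variable {d}

theorem Wass_le_of_coupling (k : ℝ) {μ ν : Measure (Ed d)} {π : Measure (Ed d × Ed d)}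
    (h₁ : π.map Prod.fst = μ) (h₂ : π.map Prod.snd = ν) :
    Wass k d μ ν ≤ (∫ p, ‖p.1 - p.2‖ ^ k ∂π) ^ (1 / k) :=
  csInf_le ⟨0, by rintro r ⟨π', -, -, rfl⟩; positivity⟩ ⟨π, h₁, h₂, rfl⟩

theorem Wass_map_le {α : Type*} [MeasurableSpace α] (k : ℝ) (P : Measure α)
    {T U : α → Ed d} (hT : Measurable T) (hU : Measurable U) :
    Wass k d (P.map T) (P.map U) ≤ (∫ v, ‖T v - U v‖ ^ k ∂P) ^ (1 / k) := by
  have hTU : Measurable fun v => (T v, U v) := hT.prodMk hU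
  calc Wass k d (P.map T) (P.map U)
      ≤ (∫ p, ‖p.1 - p.2‖ ^ k ∂(P.map fun v => (T v, U v))) ^ (1 / k) :=
        Wass_le_of_coupling k (by rw [Measure.map_map measurable_fst hTU]; rfl)
          (by rw [Measure.map_map measurable_snd hTU]; rfl)
    _ = (∫ v, ‖T v - U v‖ ^ k ∂P) ^ (1 / k) := by
        rw [integral_map hTU.aemeasurable
          (f := fun p : Ed d × Ed d => ‖p.1 - p.2‖ ^ k)
          ((measurable_fst.sub measurable_snd).norm.pow_const k).aestronglyMeasurable]

theorem Wass_map_le_eLpNorm {α : Type*} [MeasurableSpace α] {k : ℝ} (hk : 0 < k)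
    (P : Measure α) {T U : α → Ed d} (hT : Measurable T) (hU : Measurable U) :
    Wass k d (P.map T) (P.map U) ≤ (eLpNorm (T - U) (ENNReal.ofReal k) P).toReal := by
  rw [toReal_eLpNorm_ofReal hk (hT.sub hU).aestronglyMeasurable]
  exact Wass_map_le k P hT hU

theorem map_mem_Pk_of_norm_le {α : Type*} [MeasurableSpace α] {k : ℝ} (hk : 0 ≤ k)
    {P : Measure α} [IsProbabilityMeasure P] {T : α → Ed d} (hT : Measurable T) {C : ℝ}
    (hC : ∀ v, ‖T v‖ ≤ C) : P.map T ∈ Pk k d := by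
  refine ⟨Measure.isProbabilityMeasure_map hT.aemeasurable, ?_⟩
  rw [integrable_map_measure (by fun_prop) hT.aemeasurable]
  refine (integrable_const (C ^ k)).mono' (by fun_prop) (.of_forall fun v => ?_)
  rw [Function.comp_apply, Real.norm_of_nonneg (by positivity)]
  exact Real.rpow_le_rpow (norm_nonneg _) (hC v) hk

theorem memLp_id_of_mem_Pk {k : ℝ} (hk : 0 < k) {μ : Measure (Ed d)} (hμ : μ ∈ Pk k d) :
    MemLp id (ENNReal.ofReal k) μ :=
  (integrable_norm_rpow_iff aestronglyMeasurable_id (by simpa using hk) ENNReal.ofReal_ne_top).1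
    (by simpa [ENNReal.toReal_ofReal hk.le] using hμ.2)

theorem memLp_id_of_coupling {k : ℝ} (hk : 0 < k) {μ ν : Measure (Ed d)} (hμ : μ ∈ Pk k d)
    (hν : ν ∈ Pk k d) {π : Measure (Ed d × Ed d)} (h₁ : π.map Prod.fst = μ)
    (h₂ : π.map Prod.snd = ν) : MemLp id (ENNReal.ofReal k) π := by
  refine memLp_prod_iff.2 ⟨?_, ?_⟩
  · rw [← h₁] at hμ
    exact (memLp_map_measure_iff aestronglyMeasurable_id measurable_fst.aemeasurable).1
      (memLp_id_of_mem_Pk hk hμ)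
  · rw [← h₂] at hν
    exact (memLp_map_measure_iff aestronglyMeasurable_id measurable_snd.aemeasurable).1
      (memLp_id_of_mem_Pk hk hν)

end Wasserstein

theorem abs_integral_inner_le {α E : Type*} [MeasurableSpace α] [NormedAddCommGroup E]
    [InnerProductSpace ℝ E] {μ : Measure α} {p q : ℝ} (hpq : p.HolderConjugate q)
    {φ D : α → E} (hφ : MemLp φ (ENNReal.ofReal p) μ) (hD : MemLp D (ENNReal.ofReal q) μ) :
    |∫ x, ⟪D x, φ x⟫ ∂μ| ≤ (∫ x, ‖φ x‖ ^ p ∂μ) ^ (1 / p) * (∫ x, ‖D x‖ ^ q ∂μ) ^ (1 / q) := by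
  have := hpq.ennrealOfReal
  calc |∫ x, ⟪D x, φ x⟫ ∂μ| ≤ ∫ x, ‖⟪D x, φ x⟫‖ ∂μ :=
        (Real.norm_eq_abs _).symm.trans_le (norm_integral_le_integral_norm _)
    _ ≤ ∫ x, ‖φ x‖ * ‖D x‖ ∂μ :=
        integral_mono_of_nonneg (.of_forall fun _ => norm_nonneg _)
          (hφ.norm.integrable_mul hD.norm)
          (.of_forall fun x => (norm_inner_le_norm _ _).trans_eq (mul_comm _ _))
    _ ≤ _ := integral_mul_norm_le_Lp_mul_Lq hpq hφ hD

section LDerivative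

variable {d}

theorem memLp_of_norm_le_mul_one_add_rpow {k : ℝ} (hk : 1 < k) {μ : Measure (Ed d)}
    (hμ : μ ∈ Pk k d) {E : Type*} [NormedAddCommGroup E] {D : Ed d → E}
    (hD : AEStronglyMeasurable D μ) {c : ℝ} (hc : ∀ x, ‖D x‖ ≤ c * (1 + ‖x‖ ^ (k - 1))) :
    MemLp D (ENNReal.ofReal (k / (k - 1))) μ := by
  have : IsProbabilityMeasure μ := hμ.1
  -- `‖x‖ ^ (k - 1)` lies in `L^(k / (k - 1))` because `(k - 1) * (k / (k - 1)) = k`.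
  have hpow : MemLp (fun x : Ed d => ‖x‖ ^ (k - 1)) (ENNReal.ofReal (k / (k - 1))) μ := by
    have := (memLp_id_of_mem_Pk (by linarith) hμ).norm_rpow_div (ENNReal.ofReal (k - 1))
    rwa [ENNReal.toReal_ofReal (by linarith), ← ENNReal.ofReal_div_of_pos (by linarith)] at this
  refine (((memLp_const (1 : ℝ)).add hpow).const_mul c).of_le hD (.of_forall fun x => ?_)
  exact (hc x).trans (le_abs_self _)

def LocallyLipschitzAlongPushforward (k : ℝ) (f : Measure (Ed d) → ℝ) (K : ℝ) : Prop :=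
  ∀ μ ∈ Pk k d, ∀ ε > (0:ℝ), ∃ δ > (0:ℝ), ∀ φ : Ed d → Ed d, Measurable φ →
    MemLp φ (ENNReal.ofReal k) μ → (∫ x, ‖φ x‖ ^ k ∂μ) ^ (1 / k) ≤ δ →
    |f (μ.map fun x => x + φ x) - f μ| ≤ (K + ε) * (∫ x, ‖φ x‖ ^ k ∂μ) ^ (1 / k)

theorem LocallyLipschitzAlongPushforward.of_isLDerivAt {k : ℝ} (hk : 1 < k)
    {f : Measure (Ed d) → ℝ} {Df : Measure (Ed d) → Ed d → Ed d}
    (hDf : ∀ μ ∈ Pk k d, IsLDerivAt k d f μ (Df μ))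
    (hDfmem : ∀ μ ∈ Pk k d, MemLp (Df μ) (ENNReal.ofReal (k / (k - 1))) μ) {K : ℝ}
    (hK : ∀ μ ∈ Pk k d, (∫ x, ‖Df μ x‖ ^ (k / (k - 1)) ∂μ) ^ (1 / (k / (k - 1))) ≤ K) :
    LocallyLipschitzAlongPushforward k f K := by
  intro μ hμ ε hε
  obtain ⟨δ, hδ, htaylor⟩ := hDf μ hμ ε hε
  refine ⟨δ, hδ, fun φ hφ hφk hφδ => ?_⟩
  have hN : 0 ≤ (∫ x, ‖φ x‖ ^ k ∂μ) ^ (1 / k) := by positivity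
  have hremainder := htaylor φ hφ hφk hφδ
  have hlinear := (abs_integral_inner_le (Real.HolderConjugate.conjExponent hk) hφk
    (hDfmem μ hμ)).trans (mul_le_mul_of_nonneg_left (hK μ hμ) hN)
  have := abs_sub_abs_le_abs_sub (f (μ.map fun x => x + φ x) - f μ) (∫ x, ⟪Df μ x, φ x⟫ ∂μ)
  linarith

end LDerivative

theorem rpow_integral_norm_smul_rpow {α E : Type*} [MeasurableSpace α] [NormedAddCommGroup E]
    [NormedSpace ℝ E] {k : ℝ} (hk : 0 < k) (P : Measure α) (c : ℝ) (F : α → E) :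
    (∫ v, ‖c • F v‖ ^ k ∂P) ^ (1 / k) = |c| * (∫ v, ‖F v‖ ^ k ∂P) ^ (1 / k) := by
  simp_rw [norm_smul, Real.norm_eq_abs, Real.mul_rpow (abs_nonneg c) (norm_nonneg _),
    integral_const_mul]
  rw [Real.mul_rpow (by positivity) (by positivity), ← Real.rpow_mul (abs_nonneg c),
    mul_one_div_cancel hk.ne', Real.rpow_one]

section Interpolation

variable {d}

theorem continuous_comp_of_Wass_le {k : ℝ} {f : Measure (Ed d) → ℝ}
    (hfcont : ∀ μ ∈ Pk k d, ∀ ε > (0:ℝ), ∃ δ > (0:ℝ), ∀ ν ∈ Pk k d,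
      Wass k d ν μ < δ → |f ν - f μ| < ε)
    {ν : ℝ → Measure (Ed d)} (hν : ∀ t, ν t ∈ Pk k d) {C : ℝ}
    (hC : ∀ t t', Wass k d (ν t') (ν t) ≤ |t' - t| * C) : Continuous fun t => f (ν t) := by
  refine Metric.continuous_iff.2 fun t ε hε => ?_
  obtain ⟨δ, hδ, hfδ⟩ := hfcont (ν t) (hν t) ε hε
  refine ⟨δ / (|C| + 1), by positivity, fun t' ht' => ?_⟩
  rw [Real.dist_eq] at ht' ⊢
  refine hfδ _ (hν t') ((hC t t').trans_lt ?_)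
  calc |t' - t| * C ≤ |t' - t| * (|C| + 1) := by gcongr; linarith [le_abs_self C]
    _ < δ := by rwa [lt_div_iff₀ (by positivity)] at ht'

variable {α : Type*} [MeasurableSpace α]

def displacementInterpolant (P : Measure α) (s : α → Ed d × Ed d) (t : ℝ) : Measure (Ed d) :=
  P.map fun v => (s v).1 + t • ((s v).2 - (s v).1)

theorem displacementInterpolant_zero (P : Measure α) (s : α → Ed d × Ed d) :
    displacementInterpolant P s 0 = P.map fun v => (s v).1 := by
  simp [displacementInterpolant]

theorem displacementInterpolant_one (P : Measure α) (s : α → Ed d × Ed d) :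
    displacementInterpolant P s 1 = P.map fun v => (s v).2 := by
  simp [displacementInterpolant]

theorem displacementInterpolant_mem_Pk {k : ℝ} (hk : 0 ≤ k) (P : Measure α)
    [IsProbabilityMeasure P] (s : SimpleFunc α (Ed d × Ed d)) (t : ℝ) :
    displacementInterpolant P s t ∈ Pk k d := by
  obtain ⟨C, hC⟩ := s.exists_forall_norm_le
  refine map_mem_Pk_of_norm_le hk (C := C + |t| * (C + C)) (by fun_prop) fun v => ?_
  calc ‖(s v).1 + t • ((s v).2 - (s v).1)‖ ≤ ‖(s v).1‖ + |t| * (‖(s v).2‖ + ‖(s v).1‖) := by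
        grw [norm_add_le, norm_smul, norm_sub_le, Real.norm_eq_abs]
    _ ≤ C + |t| * (C + C) := by
        grw [norm_fst_le, norm_snd_le, hC]

theorem Wass_displacementInterpolant_le {k : ℝ} (hk : 0 < k) (P : Measure α)
    {s : α → Ed d × Ed d} (hs : Measurable s) (t t' : ℝ) :
    Wass k d (displacementInterpolant P s t') (displacementInterpolant P s t) ≤
      |t' - t| * (∫ v, ‖(s v).2 - (s v).1‖ ^ k ∂P) ^ (1 / k) := by
  refine (Wass_map_le k P (by fun_prop) (by fun_prop)).trans_eq ?_
  have hdiff : ∀ v, (s v).1 + t' • ((s v).2 - (s v).1) - ((s v).1 + t • ((s v).2 - (s v).1)) =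
      (t' - t) • ((s v).2 - (s v).1) := fun v => by module
  simp_rw [hdiff, rpow_integral_norm_smul_rpow hk]

theorem map_add_smul_displacementInterpolant (P : Measure α) {s : α → Ed d × Ed d}
    (hs : Measurable s) {t : ℝ} {φ : Ed d → Ed d} (hφ : Measurable φ)
    (hφs : ∀ v, φ ((s v).1 + t • ((s v).2 - (s v).1)) = (s v).2 - (s v).1) (h : ℝ) :
    (displacementInterpolant P s t).map (fun x => x + h • φ x) =
      displacementInterpolant P s (t + h) := by
  rw [displacementInterpolant, displacementInterpolant,
    Measure.map_map (by fun_prop) (by fun_prop)]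
  refine congrArg (Measure.map · P) (funext fun v => ?_)
  simp only [Function.comp_apply, hφs]
  module

end Interpolation

section SimpleCoupling

variable {d} {α : Type*} [MeasurableSpace α]

theorem eventually_abs_sub_le_of_velocity_field {k : ℝ} (hk : 0 < k)
    {f : Measure (Ed d) → ℝ} {K : ℝ} (hf : LocallyLipschitzAlongPushforward k f K)
    (P : Measure α) [IsProbabilityMeasure P] (s : SimpleFunc α (Ed d × Ed d)) {t : ℝ}
    {φ : Ed d → Ed d} (hφ : Measurable φ) {C : ℝ} (hC : ∀ x, ‖φ x‖ ≤ C)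
    (hφs : ∀ v, φ ((s v).1 + t • ((s v).2 - (s v).1)) = (s v).2 - (s v).1) {r : ℝ}
    (hr : K * (∫ v, ‖(s v).2 - (s v).1‖ ^ k ∂P) ^ (1 / k) < r) :
    ∀ᶠ z in 𝓝[>] t, |f (displacementInterpolant P s z) - f (displacementInterpolant P s t)| ≤
      r * (z - t) := by
  set M := (∫ v, ‖(s v).2 - (s v).1‖ ^ k ∂P) ^ (1 / k)
  have hM : 0 ≤ M := by positivity
  have hμ := displacementInterpolant_mem_Pk hk.le P s t
  have : IsProbabilityMeasure (displacementInterpolant P s t) := hμ.1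
  -- The `+ 1` keeps both `(K + ε) * M ≤ r` and the step size `δ / (M + 1)` valid when `M = 0`.
  obtain ⟨δ, hδ, hstep⟩ := hf _ hμ ((r - K * M) / (M + 1)) (div_pos (by linarith) (by linarith))
  filter_upwards [Ioo_mem_nhdsGT (lt_add_of_pos_right t (by positivity : 0 < δ / (M + 1)))]
    with z ⟨hzt, hzδ⟩
  have hφz : Measurable fun x => (z - t) • φ x := by fun_prop
  have hnorm : (∫ x, ‖(z - t) • φ x‖ ^ k ∂displacementInterpolant P s t) ^ (1 / k) =
      (z - t) * M := by
    rw [displacementInterpolant, integral_map (f := fun x => ‖(z - t) • φ x‖ ^ k)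
      (by fun_prop) (hφz.norm.pow_const k).aestronglyMeasurable]
    simp_rw [hφs, rpow_integral_norm_smul_rpow hk, abs_of_pos (sub_pos.2 hzt)]
    rfl
  have hmem : MemLp (fun x => (z - t) • φ x) (ENNReal.ofReal k) (displacementInterpolant P s t) :=
    .of_bound hφz.aestronglyMeasurable (|z - t| * C) (.of_forall fun x => by
      rw [norm_smul, Real.norm_eq_abs]; gcongr; exact hC x)
  have hsmall : (z - t) * M ≤ δ := by
    have : (z - t) * (M + 1) < δ := by rw [← lt_div_iff₀ (by positivity)]; linarith
    nlinarith
  have := hstep _ hφz hmem (hnorm.trans_le hsmall)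
  rw [map_add_smul_displacementInterpolant P s.measurable hφ hφs, add_sub_cancel, hnorm] at this
  refine this.trans ?_
  have : (r - K * M) / (M + 1) * M ≤ r - K * M := by
    rw [div_mul_eq_mul_div, div_le_iff₀ (by linarith)]
    nlinarith
  nlinarith

theorem abs_sub_le_of_simpleFunc {k : ℝ} (hk : 0 < k) {f : Measure (Ed d) → ℝ}
    (hfcont : ∀ μ ∈ Pk k d, ∀ ε > (0:ℝ), ∃ δ > (0:ℝ), ∀ ν ∈ Pk k d,
      Wass k d ν μ < δ → |f ν - f μ| < ε)
    {K : ℝ} (hf : LocallyLipschitzAlongPushforward k f K) (P : Measure α)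
    [IsProbabilityMeasure P] (s : SimpleFunc α (Ed d × Ed d)) :
    |f (P.map fun v => (s v).2) - f (P.map fun v => (s v).1)| ≤
      K * (∫ v, ‖(s v).2 - (s v).1‖ ^ k ∂P) ^ (1 / k) := by
  have hg := continuous_comp_of_Wass_le hfcont (displacementInterpolant_mem_Pk hk.le P s)
    (Wass_displacementInterpolant_le hk P s.measurable)
  have hloc : ∀ t ∈ Ioo 0 1 \ {t : ℝ | ∃ q ∈ s.range, ∃ q' ∈ s.range,
      q.1 + t • (q.2 - q.1) = q'.1 + t • (q'.2 - q'.1) ∧ q.2 - q.1 ≠ q'.2 - q'.1},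
      ∀ r > K * (∫ v, ‖(s v).2 - (s v).1‖ ^ k ∂P) ^ (1 / k), ∀ᶠ z in 𝓝[>] t,
      |f (displacementInterpolant P s z) - f (displacementInterpolant P s t)| ≤ r * (z - t) := by
    rintro t ⟨-, ht⟩ r hr
    obtain ⟨φ, hφ, ⟨C, hC⟩, hφs⟩ := exists_measurable_bounded_eq_on_finset s.range
      (fun q => q.1 + t • (q.2 - q.1)) (fun q => q.2 - q.1)
      fun q hq q' hq' h => not_not.1 fun hne => ht ⟨q, hq, q', hq', h, hne⟩
    exact eventually_abs_sub_le_of_velocity_field hk hf P s hφ hC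
      (fun v => hφs _ (s.mem_range_self v)) hr
  simpa [displacementInterpolant_zero, displacementInterpolant_one] using
    abs_sub_le_mul_of_eventually_off_finite (finite_setOf_crossing s.range) zero_le_one
      hg.continuousOn hloc

end SimpleCoupling

section Coupling

variable {d}

theorem eLpNorm_snd_sub_fst_le {β E : Type*} [MeasurableSpace β] [NormedAddCommGroup E]
    {p : ℝ≥0∞} (hp : 1 ≤ p) {π : Measure β} {u w : β → E × E} (hu : AEStronglyMeasurable u π)
    (hw : AEStronglyMeasurable w π) :
    eLpNorm (fun v => (u v).2 - (u v).1) p π ≤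
      eLpNorm (fun v => (w v).1 - (w v).2) p π + 2 * eLpNorm (w - u) p π := by
  have hsplit : (fun v => (u v).2 - (u v).1) = (fun v => (w v).2 - (w v).1) +
      ((fun v => (w v - u v).1) - fun v => (w v - u v).2) := by
    funext v
    simp only [Pi.add_apply, Pi.sub_apply, Prod.fst_sub, Prod.snd_sub]
    abel
  rw [hsplit, two_mul]
  refine (eLpNorm_add_le (hw.snd.sub hw.fst) ((hw.sub hu).fst.sub (hw.sub hu).snd) hp).trans
    (add_le_add (eLpNorm_mono fun v => (norm_sub_rev _ _).le) ?_)
  exact (eLpNorm_sub_le (hw.sub hu).fst (hw.sub hu).snd hp).trans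
    (add_le_add (eLpNorm_mono fun v => norm_fst_le _) (eLpNorm_mono fun v => norm_snd_le _))

theorem exists_simpleFunc_near_coupling {k : ℝ} (hk : 1 ≤ k) {μ₁ μ₂ : Measure (Ed d)}
    (hμ₁ : μ₁ ∈ Pk k d) (hμ₂ : μ₂ ∈ Pk k d) {π : Measure (Ed d × Ed d)}
    (h₁ : π.map Prod.fst = μ₁) (h₂ : π.map Prod.snd = μ₂) {δ : ℝ} (hδ : 0 < δ) :
    ∃ s : SimpleFunc (Ed d × Ed d) (Ed d × Ed d),
      Wass k d (π.map fun v => (s v).1) μ₁ < δ ∧ Wass k d (π.map fun v => (s v).2) μ₂ < δ ∧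
      (∫ v, ‖(s v).2 - (s v).1‖ ^ k ∂π) ^ (1 / k) ≤
        (∫ p, ‖p.1 - p.2‖ ^ k ∂π) ^ (1 / k) + 2 * δ := by
  have hk₀ : 0 < k := by linarith
  have hid := memLp_id_of_coupling hk₀ hμ₁ hμ₂ h₁ h₂
  obtain ⟨s, hs, hsmem⟩ := hid.exists_simpleFunc_eLpNorm_sub_lt ENNReal.ofReal_ne_top
    (ε := ENNReal.ofReal δ) (by simpa using hδ)
  set e : Ed d × Ed d → Ed d × Ed d := id - ⇑s
  have he : eLpNorm e (ENNReal.ofReal k) π ≠ ⊤ := (hid.sub hsmem).eLpNorm_ne_top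
  have he_lt : (eLpNorm e (ENNReal.ofReal k) π).toReal < δ := ENNReal.toReal_lt_of_lt_ofReal hs
  have hmarginal {T U : Ed d × Ed d → Ed d} (hT : Measurable T) (hU : Measurable U)
      (hTU : ∀ v, ‖T v - U v‖ ≤ ‖e v‖) : Wass k d (π.map T) (π.map U) < δ :=
    ((Wass_map_le_eLpNorm hk₀ π hT hU).trans
      (ENNReal.toReal_mono he (eLpNorm_mono hTU))).trans_lt he_lt
  refine ⟨s, ?_, ?_, ?_⟩
  · rw [← h₁]
    exact hmarginal (by fun_prop) measurable_fst fun v =>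
      (norm_sub_rev _ _).trans_le (norm_fst_le (e v))
  · rw [← h₂]
    exact hmarginal (by fun_prop) measurable_snd fun v =>
      (norm_sub_rev _ _).trans_le (norm_snd_le (e v))
  · have hfin : eLpNorm (fun v : Ed d × Ed d => v.1 - v.2) (ENNReal.ofReal k) π ≠ ⊤ :=
      (hid.fst.sub hid.snd).eLpNorm_ne_top
    calc (∫ v, ‖(s v).2 - (s v).1‖ ^ k ∂π) ^ (1 / k)
        = (eLpNorm (fun v => (s v).2 - (s v).1) (ENNReal.ofReal k) π).toReal :=
          (toReal_eLpNorm_ofReal hk₀ (by fun_prop)).symm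
      _ ≤ (eLpNorm (fun v : Ed d × Ed d => v.1 - v.2) (ENNReal.ofReal k) π +
          2 * eLpNorm e (ENNReal.ofReal k) π).toReal :=
          ENNReal.toReal_mono (by finiteness) (eLpNorm_snd_sub_fst_le (by simpa using hk)
            s.aestronglyMeasurable aestronglyMeasurable_id)
      _ = (∫ p, ‖p.1 - p.2‖ ^ k ∂π) ^ (1 / k) + 2 * (eLpNorm e (ENNReal.ofReal k) π).toReal := by
          rw [ENNReal.toReal_add hfin (by finiteness), ENNReal.toReal_mul,
            toReal_eLpNorm_ofReal hk₀ (by fun_prop)]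
          rfl
      _ ≤ _ := by linarith

theorem abs_sub_le_of_coupling {k : ℝ} (hk : 1 ≤ k) {f : Measure (Ed d) → ℝ}
    (hfcont : ∀ μ ∈ Pk k d, ∀ ε > (0:ℝ), ∃ δ > (0:ℝ), ∀ ν ∈ Pk k d,
      Wass k d ν μ < δ → |f ν - f μ| < ε)
    {K : ℝ} (hK : 0 ≤ K) (hf : LocallyLipschitzAlongPushforward k f K)
    {μ₁ μ₂ : Measure (Ed d)} (hμ₁ : μ₁ ∈ Pk k d) (hμ₂ : μ₂ ∈ Pk k d)
    {π : Measure (Ed d × Ed d)} (h₁ : π.map Prod.fst = μ₁) (h₂ : π.map Prod.snd = μ₂) :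
    |f μ₁ - f μ₂| ≤ K * (∫ p, ‖p.1 - p.2‖ ^ k ∂π) ^ (1 / k) := by
  have hk₀ : 0 < k := by linarith
  have : IsProbabilityMeasure (π.map Prod.fst) := h₁ ▸ hμ₁.1
  have : IsProbabilityMeasure π := Measure.isProbabilityMeasure_of_map Prod.fst
  refine le_of_forall_pos_le_add fun ε hε => ?_
  obtain ⟨δ₁, hδ₁, hf₁⟩ := hfcont μ₁ hμ₁ (ε / 3) (by positivity)
  obtain ⟨δ₂, hδ₂, hf₂⟩ := hfcont μ₂ hμ₂ (ε / 3) (by positivity)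
  set δ := min (min δ₁ δ₂) (ε / (6 * (K + 1)))
  have hδ : 0 < δ := by positivity
  obtain ⟨s, hs₁, hs₂, hcost⟩ := exists_simpleFunc_near_coupling hk hμ₁ hμ₂ h₁ h₂ hδ
  have hν₁ := displacementInterpolant_zero π s ▸ displacementInterpolant_mem_Pk hk₀.le π s 0
  have hν₂ := displacementInterpolant_one π s ▸ displacementInterpolant_mem_Pk hk₀.le π s 1
  have e₁ := hf₁ _ hν₁ (hs₁.trans_le ((min_le_left _ _).trans (min_le_left _ _)))
  have e₂ := hf₂ _ hν₂ (hs₂.trans_le ((min_le_left _ _).trans (min_le_right _ _)))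
  have e₃ := (abs_sub_le_of_simpleFunc hk₀ hfcont hf π s).trans
    (mul_le_mul_of_nonneg_left hcost hK)
  have hKδ : K * (2 * δ) ≤ ε / 3 := by
    have : δ * (6 * (K + 1)) ≤ ε := (le_div_iff₀ (by positivity)).1 (min_le_right _ _)
    nlinarith
  rw [abs_lt] at e₁ e₂
  rw [abs_le] at e₃ ⊢
  constructor <;> linarith

end Coupling

/-- an `L`-differentiable function on `𝒫_k` (`k > 1`) whose
`L`-derivatives have continuous versions of at most `(k-1)`-polynomial growth and
uniformly bounded `L^{k*}`-norms `K₀` is globally `K₀`-Lipschitz in `W_k`. -/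
theorem LDeriv_bound_implies_Wk_Lipschitz
    (k : ℝ) (hk : 1 < k)
    (f : Measure (Ed d) → ℝ)
    (hfcont : ∀ μ ∈ Pk k d, ∀ ε > (0:ℝ), ∃ δ > (0:ℝ), ∀ ν ∈ Pk k d,
      Wass k d ν μ < δ → |f ν - f μ| < ε)
    (Df : Measure (Ed d) → Ed d → Ed d)
    (hDf : ∀ μ ∈ Pk k d, IsLDerivAt k d f μ (Df μ))
    (hDfcont : ∀ μ ∈ Pk k d, Continuous (Df μ))
    (hDfgrowth : ∀ μ ∈ Pk k d, ∃ c : ℝ, ∀ x, ‖Df μ x‖ ≤ c * (1 + ‖x‖ ^ (k - 1)))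
    (K₀ : ℝ)
    (hK₀ : ∀ μ ∈ Pk k d, (∫ x, ‖Df μ x‖ ^ (k / (k - 1)) ∂μ) ^ (1 / (k / (k - 1))) ≤ K₀) :
    ∀ μ₁ ∈ Pk k d, ∀ μ₂ ∈ Pk k d, |f μ₁ - f μ₂| ≤ K₀ * Wass k d μ₁ μ₂ := by
  intro μ₁ hμ₁ μ₂ hμ₂
  have : IsProbabilityMeasure μ₁ := hμ₁.1
  have : IsProbabilityMeasure μ₂ := hμ₂.1
  have hK₀nonneg : 0 ≤ K₀ := le_trans (by positivity) (hK₀ μ₁ hμ₁)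
  have hf : LocallyLipschitzAlongPushforward k f K₀ :=
    LocallyLipschitzAlongPushforward.of_isLDerivAt hk hDf (fun μ hμ =>
      have ⟨_, hc⟩ := hDfgrowth μ hμ
      memLp_of_norm_le_mul_one_add_rpow hk hμ (hDfcont μ hμ).aestronglyMeasurable hc) hK₀
  rw [Wass, ← smul_eq_mul, ← Real.sInf_smul_of_nonneg hK₀nonneg]
  refine le_csInf (Set.Nonempty.smul_set ⟨_, μ₁.prod μ₂, by simp, by simp, rfl⟩) ?_
  rintro _ ⟨_, ⟨π, h₁, h₂, rfl⟩, rfl⟩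
  exact abs_sub_le_of_coupling hk.le hfcont hK₀nonneg hf hμ₁ hμ₂ h₁ h₂
end
end

section
/- Let k ≥ 1 and let h ∈ C¹(ℝ^d) satisfy |∇h(y)| ≤ c(1+|y|^{k−1}) for all y and some constant c > 0. Let F ∈ C¹(ℝ). Then the function f on 𝒫_k defined by f(μ) := F(μ(h)) is intrinsically differentiable at every μ ∈ 𝒫_k, with intrinsic directional derivative D^I_φ f(μ) = F'(μ(h)) · ∫ ⟨∇h(x), φ(x)⟩ μ(dx) for every φ ∈ L^k(ℝ^d → ℝ^d; μ); equivalently, the intrinsic derivative is D^I f(μ)(x) = F'(μ(h)) ∇h(x). -/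
/-!
Differentiate `t ↦ ∫ h (x + t • φ x) dμ` under the integral sign at `t = 0`. For `|t| ≤ 1` the
derivative `⟪∇h (x + t • φ x), φ x⟫` is dominated by `c (1 + (‖x‖ + ‖φ x‖) ^ (k - 1)) ‖φ x‖`,
which is integrable by Hölder's inequality with exponents `k / (k - 1)` and `k`, while `h` itself
is integrable because the mean value inequality gives `‖h x‖ ≤ ‖h 0‖ + c (‖x‖ + ‖x‖ ^ k)`.
The chain rule for `F` and the change of variables `μ ∘ (id + t • φ)⁻¹ (h) = ∫ h (x + t • φ x) dμ`
then give the claimed one-sided derivative.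
-/

open MeasureTheory Filter
open scoped ENNReal Topology RealInnerProductSpace

/-- At `k = 1` the first exponent is `ofReal 1 / 0 = ∞`. -/
lemma ENNReal.holderConjugate_ofReal_div_ofReal_sub_one {k : ℝ} (hk : 1 ≤ k) :
    HolderConjugate (ENNReal.ofReal k / ENNReal.ofReal (k - 1)) (ENNReal.ofReal k) := by
  have hk0 : ENNReal.ofReal k ≠ 0 := by simp only [ne_eq, ENNReal.ofReal_eq_zero, not_le]; linarith
  have hsum : ENNReal.ofReal (k - 1) + 1 = ENNReal.ofReal k := by
    rw [← ENNReal.ofReal_one, ← ENNReal.ofReal_add (by linarith) zero_le_one, sub_add_cancel]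
  rw [holderConjugate_iff, ENNReal.inv_div (.inr ofReal_ne_top) (.inr hk0), ← one_div,
    ENNReal.div_add_div_same, hsum, ENNReal.div_self hk0 ofReal_ne_top]

lemma integrable_norm_rpow_sub_one_mul_norm {α E F : Type*} [MeasurableSpace α] {μ : Measure α}
    [NormedAddCommGroup E] [NormedAddCommGroup F] {f : α → E} {g : α → F} {k : ℝ} (hk : 1 ≤ k)
    (hf : MemLp f (ENNReal.ofReal k) μ) (hg : MemLp g (ENNReal.ofReal k) μ) :
    Integrable (fun a => ‖f a‖ ^ (k - 1) * ‖g a‖) μ := by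
  have hf' : MemLp (fun a => ‖f a‖ ^ (k - 1)) (ENNReal.ofReal k / ENNReal.ofReal (k - 1)) μ := by
    simpa [ENNReal.toReal_ofReal (by linarith : 0 ≤ k - 1)] using
      hf.norm_rpow_div (ENNReal.ofReal (k - 1))
  have := ENNReal.holderConjugate_ofReal_div_ofReal_sub_one hk
  rw [← memLp_one_iff_integrable]
  exact hg.norm.mul' hf'

section
variable {E G : Type*} [NormedAddCommGroup E] [NormedSpace ℝ E]
  [NormedAddCommGroup G] [NormedSpace ℝ G] {h : E → G} {c k : ℝ}

lemma norm_le_of_norm_fderiv_le_rpow (hd : Differentiable ℝ h) (hc : 0 ≤ c) (hk : 1 ≤ k)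
    (hgrowth : ∀ y, ‖fderiv ℝ h y‖ ≤ c * (1 + ‖y‖ ^ (k - 1))) (a : E) :
    ‖h a‖ ≤ ‖h 0‖ + c * (‖a‖ + ‖a‖ ^ k) := by
  have hmv : ‖h a - h 0‖ ≤ c * (1 + ‖a‖ ^ (k - 1)) * ‖a - 0‖ := by
    refine (convex_closedBall (0 : E) ‖a‖).norm_image_sub_le_of_norm_fderiv_le
      (fun y _ => hd y) (fun y hy => (hgrowth y).trans ?_) (by simp) (by simp)
    have hy : ‖y‖ ≤ ‖a‖ := by simpa using hy
    gcongr
  have hpow : ‖a‖ ^ (k - 1) * ‖a‖ = ‖a‖ ^ k := by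
    rw [← Real.rpow_add_one' (norm_nonneg a) (by linarith), sub_add_cancel]
  calc ‖h a‖ ≤ ‖h 0‖ + ‖h a - h 0‖ := norm_le_insert' _ _
    _ ≤ ‖h 0‖ + c * (‖a‖ + ‖a‖ ^ k) := by
      rw [sub_zero, mul_assoc, add_mul, one_mul, hpow] at hmv
      linarith

lemma norm_fderiv_add_smul_apply_le (hc : 0 ≤ c) (hk : 1 ≤ k)
    (hgrowth : ∀ y, ‖fderiv ℝ h y‖ ≤ c * (1 + ‖y‖ ^ (k - 1))) (a v : E) {t : ℝ} (ht : |t| ≤ 1) :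
    ‖fderiv ℝ h (a + t • v) v‖ ≤ c * (1 + (‖a‖ + ‖v‖) ^ (k - 1)) * ‖v‖ := by
  have hy : ‖a + t • v‖ ≤ ‖a‖ + ‖v‖ := by
    calc ‖a + t • v‖ ≤ ‖a‖ + |t| * ‖v‖ := by simpa [norm_smul] using norm_add_le a (t • v)
      _ ≤ ‖a‖ + ‖v‖ := by gcongr; exact mul_le_of_le_one_left (norm_nonneg v) ht
  refine (ContinuousLinearMap.le_opNorm _ v).trans ?_
  gcongr
  refine (hgrowth _).trans ?_
  gcongr

end

section
variable {E : Type*} [NormedAddCommGroup E] [MeasurableSpace E] [BorelSpace E]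
  [SecondCountableTopology E] {μ : Measure E} {k : ℝ}

lemma memLp_id_of_integrable_norm_rpow (hk : 0 < k) (hμ : Integrable (fun x : E => ‖x‖ ^ k) μ) :
    MemLp id (ENNReal.ofReal k) μ := by
  refine (integrable_norm_rpow_iff aestronglyMeasurable_id ?_ ENNReal.ofReal_ne_top).1 ?_
  · simpa using hk
  · simpa [ENNReal.toReal_ofReal hk.le] using hμ

variable [NormedSpace ℝ E] {G : Type*} [NormedAddCommGroup G] [NormedSpace ℝ G]
  {h : E → G} {c : ℝ} [IsFiniteMeasure μ]

lemma integrable_of_norm_fderiv_le_rpow (hh : ContDiff ℝ 1 h) (hc : 0 ≤ c) (hk : 1 ≤ k)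
    (hgrowth : ∀ y, ‖fderiv ℝ h y‖ ≤ c * (1 + ‖y‖ ^ (k - 1)))
    (hμ : Integrable (fun x : E => ‖x‖ ^ k) μ) : Integrable h μ := by
  have hnorm : Integrable (fun x : E => ‖x‖) μ :=
    ((memLp_id_of_integrable_norm_rpow (by linarith) hμ).integrable
      (ENNReal.one_le_ofReal.2 hk)).norm
  refine Integrable.mono' (g := fun a => ‖h 0‖ + c * (‖a‖ + ‖a‖ ^ k))
    ((integrable_const _).add ((hnorm.add hμ).const_mul c))
    hh.continuous.aestronglyMeasurable (ae_of_all _ fun a => ?_)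
  exact norm_le_of_norm_fderiv_le_rpow (hh.differentiable one_ne_zero) hc hk hgrowth a

theorem hasDerivAt_integral_add_smul (hh : ContDiff ℝ 1 h) (hc : 0 ≤ c) (hk : 1 ≤ k)
    (hgrowth : ∀ y, ‖fderiv ℝ h y‖ ≤ c * (1 + ‖y‖ ^ (k - 1)))
    (hμ : Integrable (fun x : E => ‖x‖ ^ k) μ) {φ : E → E} (hφ : MemLp φ (ENNReal.ofReal k) μ) :
    HasDerivAt (fun t : ℝ => ∫ a, h (a + t • φ a) ∂μ) (∫ a, fderiv ℝ h a (φ a) ∂μ) 0 := by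
  have hmeas (t : ℝ) : AEStronglyMeasurable (fun a => a + t • φ a) μ :=
    aestronglyMeasurable_id.add (hφ.1.const_smul t)
  set ψ : E → ℝ := fun a => ‖a‖ + ‖φ a‖
  have hψ : MemLp ψ (ENNReal.ofReal k) μ :=
    (memLp_id_of_integrable_norm_rpow (by linarith) hμ).norm.add hφ.norm
  have hbound : Integrable (fun a => c * (1 + ψ a ^ (k - 1)) * ‖φ a‖) μ := by
    refine (((hφ.integrable (ENNReal.one_le_ofReal.2 hk)).norm.add
      (integrable_norm_rpow_sub_one_mul_norm hk hψ hφ)).const_mul c).congr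
      (ae_of_all _ fun a => ?_)
    simp only [ψ, Pi.add_apply, Real.norm_of_nonneg (by positivity : 0 ≤ ‖a‖ + ‖φ a‖)]
    ring
  have hderiv (a : E) (t : ℝ) :
      HasDerivAt (fun s : ℝ => h (a + s • φ a)) (fderiv ℝ h (a + t • φ a) (φ a)) t := by
    have hline : HasDerivAt (fun s : ℝ => a + s • φ a) (φ a) t := by
      simpa using ((hasDerivAt_id t).smul_const (φ a)).const_add a
    exact ((hh.differentiable one_ne_zero) _).hasFDerivAt.comp_hasDerivAt t hline
  have key := hasDerivAt_integral_of_dominated_loc_of_deriv_le (μ := μ) (x₀ := 0)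
    (F := fun t a => h (a + t • φ a)) (F' := fun t a => fderiv ℝ h (a + t • φ a) (φ a))
    (Metric.closedBall_mem_nhds 0 one_pos)
    (Eventually.of_forall fun t => hh.continuous.comp_aestronglyMeasurable (hmeas t))
    (by simpa using integrable_of_norm_fderiv_le_rpow hh hc hk hgrowth hμ)
    (isBoundedBilinearMap_apply.continuous.comp_aestronglyMeasurable₂
      ((hh.continuous_fderiv one_ne_zero).comp_aestronglyMeasurable (hmeas 0)) hφ.1)
    (ae_of_all _ fun a t ht => norm_fderiv_add_smul_apply_le hc hk hgrowth a (φ a)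
      (by simpa using ht))
    hbound
    (ae_of_all _ fun a t _ => hderiv a t)
  simpa using key.2
end

theorem cylindrical_intrinsic_derivative_general
    (d : ℕ) (k : ℝ) (hk : 1 ≤ k)
    (h : EuclideanSpace ℝ (Fin d) → ℝ) (hh : ContDiff ℝ 1 h)
    (c : ℝ) (hc : 0 < c)
    (hgrad : ∀ y, ‖gradient h y‖ ≤ c * (1 + ‖y‖ ^ (k - 1)))
    (F : ℝ → ℝ) (hF : ContDiff ℝ 1 F)
    (μ : Measure (EuclideanSpace ℝ (Fin d))) [IsProbabilityMeasure μ]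
    (hμ : Integrable (fun x => ‖x‖ ^ k) μ)
    (φ : EuclideanSpace ℝ (Fin d) → EuclideanSpace ℝ (Fin d))
    (hφ : MemLp φ (ENNReal.ofReal k) μ) :
    Tendsto
      (fun ε : ℝ =>
        (F (∫ x, h x ∂(μ.map (fun x => x + ε • φ x))) - F (∫ x, h x ∂μ)) / ε)
      (nhdsWithin 0 (Set.Ioi 0))
      (nhds (deriv F (∫ x, h x ∂μ) * ∫ x, ⟪gradient h x, φ x⟫ ∂μ)) := by
  have hgrowth (y : EuclideanSpace ℝ (Fin d)) : ‖fderiv ℝ h y‖ ≤ c * (1 + ‖y‖ ^ (k - 1)) := by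
    rw [← toDual_gradient, LinearIsometryEquiv.norm_map]
    exact hgrad y
  have hpush (t : ℝ) : ∫ x, h x ∂(μ.map (fun x => x + t • φ x)) = ∫ a, h (a + t • φ a) ∂μ :=
    integral_map (aemeasurable_id.add (hφ.1.aemeasurable.const_smul t))
      hh.continuous.aestronglyMeasurable
  have hline : HasDerivAt (fun t : ℝ => ∫ a, h (a + t • φ a) ∂μ)
      (∫ x, ⟪gradient h x, φ x⟫ ∂μ) 0 := by
    simpa only [inner_gradient_left] using hasDerivAt_integral_add_smul hh hc.le hk hgrowth hμ hφ
  have hcomp :=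
    (hF.differentiable one_ne_zero (∫ x, h x ∂μ)).hasDerivAt.comp_of_eq 0 hline (by simp)
  simpa [hpush, div_eq_inv_mul] using hcomp.tendsto_slope_zero_right

/-- for a cylindrical function `f(μ) = F(μ(h))` with `F ∈ C¹(ℝ)` and
`h ∈ C¹(ℝ^d)` satisfying `|∇h(y)| ≤ c(1+|y|^{k-1})`, `f` is intrinsically
differentiable at every `μ ∈ 𝒫_k` with
`D^I_φ f(μ) = F'(μ(h)) ∫ ⟪∇h(x), φ(x)⟫ μ(dx)`. -/
theorem cylindrical_intrinsic_derivative
    (d : ℕ) (k : ℝ) (hk : 1 ≤ k)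
    (h : EuclideanSpace ℝ (Fin d) → ℝ) (hh : ContDiff ℝ 1 h)
    (c : ℝ) (hc : 0 < c)
    (hgrad : ∀ y, ‖gradient h y‖ ≤ c * (1 + ‖y‖ ^ (k - 1)))
    (F : ℝ → ℝ) (hF : ContDiff ℝ 1 F)
    (μ : Measure (EuclideanSpace ℝ (Fin d))) [IsProbabilityMeasure μ]
    (hμ : Integrable (fun x => ‖x‖ ^ k) μ)
    (φ : EuclideanSpace ℝ (Fin d) → EuclideanSpace ℝ (Fin d))
    (hφmeas : Measurable φ)
    (hφ : MemLp φ (ENNReal.ofReal k) μ) :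
    Tendsto
      (fun ε : ℝ =>
        (F (∫ x, h x ∂(μ.map (fun x => x + ε • φ x))) - F (∫ x, h x ∂μ)) / ε)
      (nhdsWithin 0 (Set.Ioi 0))
      (nhds (deriv F (∫ x, h x ∂μ) * ∫ x, ⟪gradient h x, φ x⟫ ∂μ)) :=
  cylindrical_intrinsic_derivative_general d k hk h hh c hc hgrad F hF μ hμ φ hφ
end
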